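/- Exponential concentration of the Curie–Weiss de Finetti measures in the high temperature regime: Let 0 < β < 1 and define F(m) := (1/2)((1/β)(artanh m)² + ln(1 − m²)) for m ∈ (−1,1). For each n let μ_n be the probability measure on (−1,1) with density proportional to exp(−n F(m))/(1 − m²) with respect to Lebesgue measure. Then for every δ ∈ (0,1) there exist constants C, D > 0 such that μ_n((−1,1) \ [−δ, δ]) ≤ C exp(−D n) for all n ∈ ℕ. -/

import Mathlib

open MeasureTheory Filter Topology

noncomputable section

/-- The function `F(m) = (1/2)((1/β)(artanh m)² + ln(1 − m²))` of the de Finetti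
representation of the Curie–Weiss model, with `artanh m = (1/2) ln((1+m)/(1−m))`. -/
def cwF (β m : ℝ) : ℝ :=
  (1 / 2) * ((1 / β) * ((1 / 2) * Real.log ((1 + m) / (1 - m))) ^ 2
    + Real.log (1 - m ^ 2))

def cwA (m : ℝ) : ℝ := (1 / 2) * Real.log ((1 + m) / (1 - m))

lemma cwF_eq (β m : ℝ) : cwF β m
    = (1/2) * ((1/β) * (cwA m)^2 + Real.log (1 - m^2)) := rfl

-- L1 : log(1-m^2) ≥ -(cwA m)^2
lemma cwA_sq_lemma {m : ℝ} (hm : m ∈ Set.Ioo (-1:ℝ) 1) :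
    -((cwA m) ^ 2) ≤ Real.log (1 - m ^ 2) := by
  obtain ⟨hm1, hm2⟩ := hm
  have h1 : (0:ℝ) < 1 + m := by linarith
  have h2 : (0:ℝ) < 1 - m := by linarith
  have hr : (0:ℝ) < (1 + m) / (1 - m) := by positivity
  set t := cwA m with ht
  set u := Real.exp t with hudef
  have hu0 : 0 < u := Real.exp_pos t
  have hu2 : u ^ 2 = (1 + m) / (1 - m) := by
    rw [hudef, ← Real.exp_nat_mul]
    rw [ht, cwA]
    rw [show ((2:ℕ):ℝ) * ((1/2) * Real.log ((1+m)/(1-m))) = Real.log ((1+m)/(1-m)) by push_cast; ring]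
    exact Real.exp_log hr
  have hu2' : u ^ 2 * (1 - m) = 1 + m := by
    field_simp at hu2; linarith [hu2]
  have hcosh : Real.cosh t = (u + u⁻¹) / 2 := by
    rw [Real.cosh_eq, Real.exp_neg]
  have key : (1 - m ^ 2) * (Real.cosh t) ^ 2 = 1 := by
    rw [hcosh]
    field_simp
    nlinarith [hu2', sq_nonneg u]
  have hcoshpos : 0 < Real.cosh t := Real.cosh_pos t
  have h1m2 : (0:ℝ) < 1 - m ^ 2 := by nlinarith
  have heq : 1 - m ^ 2 = ((Real.cosh t) ^ 2)⁻¹ := by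
    field_simp
    linarith [key]
  have hlogcosh : Real.log (Real.cosh t) ≤ t ^ 2 / 2 :=
    (Real.log_le_iff_le_exp hcoshpos).2 (Real.cosh_le_exp_half_sq t)
  rw [heq, Real.log_inv, Real.log_pow]
  push_cast
  linarith

-- L2 : -log(1-m^2) ≤ 2 |cwA m|
lemma neg_log_le_abs {m : ℝ} (hm : m ∈ Set.Ioo (-1:ℝ) 1) :
    -Real.log (1 - m ^ 2) ≤ 2 * |cwA m| := by
  obtain ⟨hm1, hm2⟩ := hm
  have h1 : (0:ℝ) < 1 + m := by linarith
  have h2 : (0:ℝ) < 1 - m := by linarith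
  have hL : Real.log (1 - m ^ 2) = Real.log (1 + m) + Real.log (1 - m) := by
    rw [show 1 - m ^ 2 = (1 + m) * (1 - m) by ring, Real.log_mul h1.ne' h2.ne']
  have hA : cwA m = (1/2) * (Real.log (1 + m) - Real.log (1 - m)) := by
    rw [cwA, Real.log_div h1.ne' h2.ne']
  rw [hL, hA]
  rcases le_or_gt 0 m with h | h
  · have ha : 0 ≤ Real.log (1 + m) := Real.log_nonneg (by linarith)
    have := le_abs_self ((1/2) * (Real.log (1 + m) - Real.log (1 - m)))
    linarith
  · have hb : 0 ≤ Real.log (1 - m) := Real.log_nonneg (by linarith)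
    have := neg_abs_le ((1/2) * (Real.log (1 + m) - Real.log (1 - m)))
    linarith

-- L3
lemma cwF_lower {β : ℝ} (hβ0 : 0 < β) (hβ1 : β < 1) {m : ℝ}
    (hm : m ∈ Set.Ioo (-1:ℝ) 1) :
    ((1 - β) / (2 * β)) * (cwA m) ^ 2 ≤ cwF β m := by
  have h1 := cwA_sq_lemma hm
  rw [cwF_eq]
  have hb : 0 < 1/β := by positivity
  have : (cwA m)^2 ≤ (1/β) * (cwA m)^2 := by
    rw [one_div, ← div_eq_inv_mul, le_div_iff₀ hβ0]
    nlinarith [sq_nonneg (cwA m)]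
  have he : ((1 - β) / (2 * β)) * (cwA m) ^ 2
      = (1/2) * ((1/β) * (cwA m)^2 - (cwA m)^2) := by
    field_simp
  linarith

-- L4
lemma cwA_pos {δ : ℝ} (h0 : 0 < δ) (h1 : δ < 1) : 0 < cwA δ := by
  have : (1:ℝ) < (1 + δ) / (1 - δ) := by
    rw [lt_div_iff₀ (by linarith)]; linarith
  have := Real.log_pos this
  rw [cwA]; linarith

lemma cwA_abs_mono {δ m : ℝ} (h0 : 0 < δ) (h1 : δ < 1)
    (hm : m ∈ Set.Ioo (-1:ℝ) 1) (hδm : δ ≤ |m|) : cwA δ ≤ |cwA m| := by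
  obtain ⟨hm1, hm2⟩ := hm
  have h2 : (0:ℝ) < 1 - δ := by linarith
  have h3 : (0:ℝ) < 1 + δ := by linarith
  have hrδ : (0:ℝ) < (1 + δ) / (1 - δ) := by positivity
  rcases le_or_gt 0 m with h | h
  · have hδle : δ ≤ m := by rwa [abs_of_nonneg h] at hδm
    have hmono : (1 + δ) / (1 - δ) ≤ (1 + m) / (1 - m) := by
      rw [div_le_div_iff₀ (by linarith) (by linarith)]; nlinarith
    have := Real.log_le_log hrδ hmono
    calc cwA δ ≤ cwA m := by rw [cwA, cwA]; linarith
      _ ≤ |cwA m| := le_abs_self _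
  · have hδle : m ≤ -δ := by rw [abs_of_neg h] at hδm; linarith
    have hmono : (1 + δ) / (1 - δ) ≤ (1 - m) / (1 + m) := by
      rw [div_le_div_iff₀ (by linarith) (by linarith)]; nlinarith
    have hlog := Real.log_le_log hrδ hmono
    have hinv : ((1 + m) / (1 - m))⁻¹ = (1 - m) / (1 + m) := by
      rw [inv_div]
    have : cwA δ ≤ -cwA m := by
      rw [cwA, cwA,
        show -((1:ℝ)/2 * Real.log ((1+m)/(1-m)))
          = 1/2 * Real.log (((1+m)/(1-m))⁻¹) by rw [Real.log_inv]; ring,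
        hinv]
      linarith
    calc cwA δ ≤ -cwA m := this
      _ ≤ |cwA m| := neg_le_abs _

-- L5 : upper bound for integrand, s ≥ 1
lemma integrand_le {β : ℝ} (hβ0 : 0 < β) {m : ℝ}
    (hm : m ∈ Set.Ioo (-1:ℝ) 1) {s : ℝ} (hs : 1 ≤ s) :
    Real.exp (-s * cwF β m) / (1 - m ^ 2)
      ≤ Real.exp ((s + 2) ^ 2 * β / (2 * s)) := by
  obtain ⟨hm1, hm2⟩ := hm
  have h1m2 : (0:ℝ) < 1 - m ^ 2 := by nlinarith
  have hL := neg_log_le_abs ⟨hm1, hm2⟩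
  have heq : Real.exp (-s * cwF β m) / (1 - m ^ 2)
      = Real.exp (-s * cwF β m - Real.log (1 - m ^ 2)) := by
    rw [Real.exp_sub, Real.exp_log h1m2]
  rw [heq]
  apply Real.exp_le_exp.2
  have habs : 0 ≤ |cwA m| := abs_nonneg _
  have hAsq : (cwA m)^2 = |cwA m|^2 := (sq_abs _).symm
  -- -s * F - L ≤ -(s/(2β)) A² + (s+2)|A| ≤ (s+2)²β/(2s)
  have hspos : 0 < s := by linarith
  set A := |cwA m| with hA
  set L := Real.log (1 - m ^ 2) with hLdef
  have keyeq : -s * cwF β m - L = -(s/(2*β)) * (cwA m)^2 - (s/2+1) * L := by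
    rw [cwF_eq]; field_simp; ring
  have hstep : (s/2+1) * (-L) ≤ (s/2+1) * (2 * A) :=
    mul_le_mul_of_nonneg_left hL (by linarith)
  have hring : (s/2+1) * (2 * A) = (s+2) * A := by ring
  have hfin : -(s/(2*β)) * A^2 + (s+2) * A ≤ (s+2)^2 * β / (2*s) := by
    have hq : (s+2)^2 * β / (2*s) + (s/(2*β)) * A^2 - (s+2) * A
        = (s * A - β * (s+2))^2 / (2*β*s) := by field_simp; ring
    have : (0:ℝ) ≤ (s * A - β * (s+2))^2 / (2*β*s) := by positivity
    linarith
  have hAsq2 : (cwA m)^2 = A^2 := by rw [hA, sq_abs]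
  rw [keyeq, hAsq2]
  linarith

-- L7 : continuity
lemma cwF_contAt (β : ℝ) : ContinuousAt (cwF β) 0 := by
  have h1 : ContinuousAt (fun m : ℝ => (1 + m) / (1 - m)) 0 := by
    apply ContinuousAt.div (by fun_prop) (by fun_prop); norm_num
  have h2 : ContinuousAt (fun m : ℝ => Real.log ((1 + m) / (1 - m))) 0 :=
    (Real.continuousAt_log (by norm_num)).comp h1
  have h3 : ContinuousAt (fun m : ℝ => Real.log (1 - m ^ 2)) 0 :=
    (Real.continuousAt_log (by norm_num)).comp (by fun_prop)
  unfold cwF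
  fun_prop

lemma cwF_zero (β : ℝ) : cwF β 0 = 0 := by simp [cwF]

lemma integrand_contOn (β : ℝ) (s : ℝ) :
    ContinuousOn (fun m : ℝ => Real.exp (-s * cwF β m) / (1 - m ^ 2))
      (Set.Ioo (-1:ℝ) 1) := by
  have hden : ∀ x ∈ Set.Ioo (-1:ℝ) 1, (1:ℝ) - x ≠ 0 := by
    intro x hx; obtain ⟨h1, h2⟩ := hx; intro h; linarith [h]
  have h1 : ContinuousOn (fun m : ℝ => (1 + m) / (1 - m)) (Set.Ioo (-1:ℝ) 1) :=
    ContinuousOn.div (by fun_prop) (by fun_prop) hden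
  have h2 : ContinuousOn (fun m : ℝ => Real.log ((1 + m) / (1 - m)))
      (Set.Ioo (-1:ℝ) 1) := by
    apply h1.log
    intro x hx; obtain ⟨ha, hb⟩ := hx
    have : (0:ℝ) < (1 + x) / (1 - x) := by
      apply div_pos <;> linarith
    exact this.ne'
  have h3 : ContinuousOn (fun m : ℝ => Real.log (1 - m ^ 2)) (Set.Ioo (-1:ℝ) 1) := by
    apply ContinuousOn.log (by fun_prop)
    intro x hx; obtain ⟨ha, hb⟩ := hx
    have : (0:ℝ) < 1 - x ^ 2 := by nlinarith
    exact this.ne'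
  have hF : ContinuousOn (fun m : ℝ => cwF β m) (Set.Ioo (-1:ℝ) 1) := by
    unfold cwF
    exact continuousOn_const.mul
      ((continuousOn_const.mul ((continuousOn_const.mul h2).pow 2)).add h3)
  apply ContinuousOn.div
  · exact Real.continuous_exp.comp_continuousOn (continuousOn_const.mul hF)
  · fun_prop
  · intro x hx; obtain ⟨ha, hb⟩ := hx
    have : (0:ℝ) < 1 - x ^ 2 := by nlinarith
    exact this.ne'

lemma integrand_integrableOn {β : ℝ} (hβ0 : 0 < β) {s : ℝ} (hs : 1 ≤ s) :
    IntegrableOn (fun m : ℝ => Real.exp (-s * cwF β m) / (1 - m ^ 2))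
      (Set.Ioo (-1:ℝ) 1) := by
  have hmeas : AEStronglyMeasurable (fun m : ℝ => Real.exp (-s * cwF β m) / (1 - m ^ 2))
      (volume.restrict (Set.Ioo (-1:ℝ) 1)) :=
    (integrand_contOn β s).aestronglyMeasurable measurableSet_Ioo
  have hconst : IntegrableOn (fun _ : ℝ => Real.exp ((s + 2) ^ 2 * β / (2 * s)))
      (Set.Ioo (-1:ℝ) 1) volume :=
    integrableOn_const measure_Ioo_lt_top.ne
  apply hconst.mono' hmeas
  rw [ae_restrict_iff' measurableSet_Ioo]
  filter_upwards with m hm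
  obtain ⟨h1, h2⟩ := hm
  have hpos : (0:ℝ) < 1 - m ^ 2 := by nlinarith
  rw [Real.norm_eq_abs, abs_of_nonneg (by positivity)]
  exact integrand_le hβ0 ⟨h1, h2⟩ hs

lemma not_int_one_div :
    ¬ IntegrableOn (fun m : ℝ => 1 / (1 - m ^ 2)) (Set.Ioo (-1:ℝ) 1) := by
  intro h
  have h2 : IntegrableOn (fun m : ℝ => 1 / (1 - m ^ 2)) (Set.Ioo (0:ℝ) 1) :=
    h.mono_set (fun x hx => ⟨by linarith [hx.1], hx.2⟩)
  have h3 : IntegrableOn (fun x : ℝ => (x - 1)⁻¹) (Set.Ioo (0:ℝ) 1) := by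
    apply Integrable.mono (h2.const_mul 2)
      ((measurable_id.sub_const 1).inv.aestronglyMeasurable)
    rw [ae_restrict_iff' measurableSet_Ioo]
    filter_upwards with x hx
    obtain ⟨hx1, hx2⟩ := hx
    have hpos : (0:ℝ) < 1 - x ^ 2 := by nlinarith
    simp only [id_eq, Pi.inv_apply]
    rw [Real.norm_eq_abs, Real.norm_eq_abs, abs_inv,
      abs_of_neg (by linarith : x - 1 < 0),
      abs_of_nonneg (by positivity : (0:ℝ) ≤ 2 * (1 / (1 - x ^ 2)))]
    rw [inv_eq_one_div, div_le_iff₀ (by linarith : (0:ℝ) < -(x - 1))]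
    set y := 1 / (1 - x ^ 2) with hydef
    have hy : y * (1 - x ^ 2) = 1 := by rw [hydef]; field_simp
    have hy0 : 0 < y := by rw [hydef]; positivity
    nlinarith [hy, mul_nonneg (mul_nonneg hy0.le
      (by linarith : (0:ℝ) ≤ 1 - x)) (by linarith : (0:ℝ) ≤ 1 - x)]
  have h4 : IntervalIntegrable (fun x : ℝ => (x - 1)⁻¹) volume 0 1 :=
    (intervalIntegrable_iff_integrableOn_Ioo_of_le (by norm_num)).2 h3
  rw [intervalIntegrable_sub_inv_iff] at h4
  rcases h4 with h' | h'
  · norm_num at h'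
  · exact h' (by rw [Set.uIcc_of_le (by norm_num : (0:ℝ) ≤ 1)]; norm_num)

set_option maxHeartbeats 1000000 in
/-- **Exponential concentration of the Curie–Weiss de Finetti measures in the high
temperature regime** `0 < β < 1`: for the probability measures `μ_n` on `(−1,1)`
with density proportional to `e^{−nF(m)}/(1−m²)`, for every `δ ∈ (0,1)` there are
constants `C, D > 0` with `μ_n((−1,1) \ [−δ,δ]) ≤ C e^{−Dn}` for all `n`. -/
theorem cwm_de_finetti_concentration
    (β : ℝ) (hβ0 : 0 < β) (hβ1 : β < 1) :
    ∀ δ ∈ Set.Ioo (0 : ℝ) 1, ∃ C > (0 : ℝ), ∃ D > (0 : ℝ), ∀ n : ℕ,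
      (∫ m in Set.Ioo (-1 : ℝ) 1 \ Set.Icc (-δ) δ,
          Real.exp (-(n : ℝ) * cwF β m) / (1 - m ^ 2)) /
        (∫ m in Set.Ioo (-1 : ℝ) 1,
          Real.exp (-(n : ℝ) * cwF β m) / (1 - m ^ 2))
        ≤ C * Real.exp (-D * n) := by
  intro δ hδ
  obtain ⟨hδ0, hδ1⟩ := hδ
  set c : ℝ := (1 - β) / (2 * β) with hc
  have hcpos : 0 < c := div_pos (by linarith) (by linarith)
  have hApos : 0 < cwA δ := cwA_pos hδ0 hδ1
  set a : ℝ := c * (cwA δ) ^ 2 with ha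
  have hapos : 0 < a := mul_pos hcpos (by positivity)
  -- small interval where cwF < a/2
  have hev : ∀ᶠ m in nhds (0:ℝ), cwF β m < a / 2 := by
    have h := cwF_contAt β
    rw [ContinuousAt, cwF_zero] at h
    exact h.eventually_lt_const (by positivity)
  rw [Metric.eventually_nhds_iff] at hev
  obtain ⟨ε, hε, hball⟩ := hev
  set η : ℝ := min (ε / 2) (1 / 2) with hη
  have hη0 : 0 < η := lt_min (by positivity) (by norm_num)
  have hη2 : η ≤ 1 / 2 := min_le_right _ _
  have hηball : ∀ m : ℝ, |m| ≤ η → cwF β m < a / 2 := by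
    intro m hm
    apply hball
    rw [Real.dist_eq, sub_zero]
    calc |m| ≤ η := hm
      _ ≤ ε / 2 := min_le_left _ _
      _ < ε := by linarith
  set B₁ : ℝ := Real.exp (((1:ℝ) + 2) ^ 2 * β / (2 * 1)) with hB
  have hB₁pos : 0 < B₁ := Real.exp_pos _
  refine ⟨B₁ * Real.exp a / η, by positivity, a / 2, by positivity, ?_⟩
  intro n
  rcases Nat.eq_zero_or_pos n with rfl | hn
  · have h0 : (∫ m in Set.Ioo (-1:ℝ) 1,
        Real.exp (-((0:ℕ):ℝ) * cwF β m) / (1 - m ^ 2)) = 0 := by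
      apply integral_undef
      have heqf : (fun m : ℝ => Real.exp (-((0:ℕ):ℝ) * cwF β m) / (1 - m ^ 2))
          = fun m : ℝ => 1 / (1 - m ^ 2) := by
        funext m; norm_num
      rw [heqf]
      exact not_int_one_div
    rw [h0, div_zero]
    positivity
  · have hn1 : (1:ℝ) ≤ (n:ℝ) := by exact_mod_cast hn
    have hn0 : (0:ℝ) ≤ (n:ℝ) := by linarith
    set S : Set ℝ := Set.Ioo (-1:ℝ) 1 \ Set.Icc (-δ) δ with hS
    have hSmeas : MeasurableSet S := measurableSet_Ioo.diff measurableSet_Icc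
    have hSsub : S ⊆ Set.Ioo (-1:ℝ) 1 := Set.diff_subset
    have hIntn : IntegrableOn
        (fun m : ℝ => Real.exp (-(n:ℝ) * cwF β m) / (1 - m ^ 2))
        (Set.Ioo (-1:ℝ) 1) := integrand_integrableOn hβ0 hn1
    -- pointwise bound on S
    have hptS : ∀ m ∈ S, Real.exp (-(n:ℝ) * cwF β m) / (1 - m ^ 2)
        ≤ B₁ * Real.exp (-((n:ℝ) - 1) * a) := by
      intro m hm
      obtain ⟨hmI, hmN⟩ := hm
      have hδm : δ ≤ |m| := by
        rw [Set.mem_Icc, not_and_or] at hmN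
        rcases hmN with h' | h'
        · push_neg at h'
          calc δ ≤ -m := by linarith
            _ ≤ |m| := neg_le_abs m
        · push_neg at h'
          calc δ ≤ m := h'.le
            _ ≤ |m| := le_abs_self m
      have hFm : a ≤ cwF β m := by
        have h1 : cwA δ ≤ |cwA m| := cwA_abs_mono hδ0 hδ1 hmI hδm
        have h2 : (cwA δ) ^ 2 ≤ (cwA m) ^ 2 := by
          rw [← sq_abs (cwA m)]
          exact pow_le_pow_left₀ hApos.le h1 2
        calc a = c * (cwA δ) ^ 2 := rfl
          _ ≤ c * (cwA m) ^ 2 := by nlinarith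
          _ ≤ cwF β m := cwF_lower hβ0 hβ1 hmI
      have hsplit : Real.exp (-(n:ℝ) * cwF β m) / (1 - m ^ 2)
          = Real.exp (-((n:ℝ) - 1) * cwF β m)
            * (Real.exp (-1 * cwF β m) / (1 - m ^ 2)) := by
        rw [mul_div_assoc', ← Real.exp_add]
        ring_nf
      rw [hsplit]
      have h1 : Real.exp (-1 * cwF β m) / (1 - m ^ 2) ≤ B₁ := by
        have := integrand_le hβ0 hmI (le_refl (1:ℝ))
        rw [hB]
        exact this
      have h2 : Real.exp (-((n:ℝ) - 1) * cwF β m)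
          ≤ Real.exp (-((n:ℝ) - 1) * a) := by
        apply Real.exp_le_exp.2
        nlinarith
      have hm2 : (0:ℝ) < 1 - m ^ 2 := by
        obtain ⟨u, v⟩ := hmI; nlinarith
      calc Real.exp (-((n:ℝ) - 1) * cwF β m)
            * (Real.exp (-1 * cwF β m) / (1 - m ^ 2))
          ≤ Real.exp (-((n:ℝ) - 1) * a) * B₁ := by
            apply mul_le_mul h2 h1 (by positivity) (Real.exp_nonneg _)
        _ = B₁ * Real.exp (-((n:ℝ) - 1) * a) := by ring
    -- numerator bound
    have hvolS : (volume S).toReal ≤ 2 := by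
      have h1 : volume S ≤ volume (Set.Ioo (-1:ℝ) 1) := measure_mono hSsub
      rw [Real.volume_Ioo] at h1
      calc (volume S).toReal ≤ (ENNReal.ofReal (1 - (-1))).toReal :=
            ENNReal.toReal_mono (by simp) h1
        _ = 2 := by rw [ENNReal.toReal_ofReal] <;> norm_num
    have hnum : (∫ m in S, Real.exp (-(n:ℝ) * cwF β m) / (1 - m ^ 2))
        ≤ 2 * (B₁ * Real.exp (-((n:ℝ) - 1) * a)) := by
      have hconst : IntegrableOn
          (fun _ : ℝ => B₁ * Real.exp (-((n:ℝ) - 1) * a)) S volume :=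
        integrableOn_const (ne_of_lt
          (lt_of_le_of_lt (measure_mono hSsub) measure_Ioo_lt_top))
      have := setIntegral_mono_on (hIntn.mono_set hSsub) hconst hSmeas hptS
      rw [setIntegral_const, smul_eq_mul, measureReal_def] at this
      have hcpos' : 0 ≤ B₁ * Real.exp (-((n:ℝ) - 1) * a) := by positivity
      nlinarith [this, hvolS, ENNReal.toReal_nonneg (a := volume S)]
    -- denominator bound
    have hsub2 : Set.Icc (-η) η ⊆ Set.Ioo (-1:ℝ) 1 := by
      intro x hx
      obtain ⟨u, v⟩ := hx
      constructor <;> [linarith; linarith]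
    have hden1 : (2 * η) * Real.exp (-(n:ℝ) * (a / 2))
        ≤ ∫ m in Set.Icc (-η) η,
            Real.exp (-(n:ℝ) * cwF β m) / (1 - m ^ 2) := by
      have hpt : ∀ m ∈ Set.Icc (-η) η,
          Real.exp (-(n:ℝ) * (a / 2))
            ≤ Real.exp (-(n:ℝ) * cwF β m) / (1 - m ^ 2) := by
        intro m hm
        obtain ⟨u, v⟩ := hm
        have habs : |m| ≤ η := abs_le.2 ⟨by linarith, v⟩
        have hFm : cwF β m < a / 2 := hηball m habs
        have hm2a : (0:ℝ) < 1 - m ^ 2 := by nlinarith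
        have hm2b : 1 - m ^ 2 ≤ 1 := by nlinarith
        rw [le_div_iff₀ hm2a]
        have hexp : Real.exp (-(n:ℝ) * (a / 2)) ≤ Real.exp (-(n:ℝ) * cwF β m) := by
          apply Real.exp_le_exp.2
          nlinarith
        nlinarith [Real.exp_pos (-(n:ℝ) * (a / 2))]
      have hconst : IntegrableOn
          (fun _ : ℝ => Real.exp (-(n:ℝ) * (a / 2))) (Set.Icc (-η) η) volume :=
        integrableOn_const measure_Icc_lt_top.ne
      have := setIntegral_mono_on hconst (hIntn.mono_set hsub2)
        measurableSet_Icc hpt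
      rw [setIntegral_const, smul_eq_mul, measureReal_def, Real.volume_Icc] at this
      rw [show η - -η = 2 * η by ring] at this
      rw [ENNReal.toReal_ofReal (by linarith)] at this
      exact this
    have hden2 : (∫ m in Set.Icc (-η) η,
          Real.exp (-(n:ℝ) * cwF β m) / (1 - m ^ 2))
        ≤ ∫ m in Set.Ioo (-1:ℝ) 1,
            Real.exp (-(n:ℝ) * cwF β m) / (1 - m ^ 2) := by
      apply setIntegral_mono_set hIntn
      · rw [Filter.EventuallyLE]
        rw [ae_restrict_iff' measurableSet_Ioo]
        filter_upwards with m hm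
        obtain ⟨u, v⟩ := hm
        have : (0:ℝ) < 1 - m ^ 2 := by nlinarith
        positivity
      · exact HasSubset.Subset.eventuallyLE hsub2
    have hdpos : 0 < (2 * η) * Real.exp (-(n:ℝ) * (a / 2)) := by positivity
    have hdenpos : 0 < ∫ m in Set.Ioo (-1:ℝ) 1,
        Real.exp (-(n:ℝ) * cwF β m) / (1 - m ^ 2) :=
      lt_of_lt_of_le hdpos (hden1.trans hden2)
    have hfinal : (∫ m in S, Real.exp (-(n:ℝ) * cwF β m) / (1 - m ^ 2)) /
        (∫ m in Set.Ioo (-1:ℝ) 1, Real.exp (-(n:ℝ) * cwF β m) / (1 - m ^ 2))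
        ≤ (2 * (B₁ * Real.exp (-((n:ℝ) - 1) * a)))
          / ((2 * η) * Real.exp (-(n:ℝ) * (a / 2))) := by
      apply div_le_div₀ (by positivity) hnum hdpos (hden1.trans hden2)
    refine hfinal.trans (le_of_eq ?_)
    have key : Real.exp (-((n:ℝ) - 1) * a)
        = Real.exp a * Real.exp (-(a / 2) * (n:ℝ)) * Real.exp (-(n:ℝ) * (a / 2)) := by
      rw [← Real.exp_add, ← Real.exp_add]
      ring_nf
    rw [key]
    have hexpne : Real.exp (-(n:ℝ) * (a / 2)) ≠ 0 := (Real.exp_pos _).ne'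
    field_simp
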